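/- For every natural number n, the numerator closure polynomial of the n-th ⊕-power of the bracket pair (x + 2, 1) equals (2x + 2)ⁿ + (x² − 1)·(x + 2)ⁿ. (This is the bracket polynomial of the numerator closure of the n-fold horizontal sum of the tangle 1/[2].) -/

import Mathlib

open Polynomial

/-- Sum of bracket pairs: (a₁,b₁) ⊕ (a₂,b₂) = (a₁a₂, a₁b₂ + b₁a₂ + x·b₁b₂). -/
noncomputable def bpSum (p q : ℤ[X] × ℤ[X]) : ℤ[X] × ℤ[X] :=
  (p.1 * q.1, p.1 * q.2 + p.2 * q.1 + X * (p.2 * q.2))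

/-- n-th ⊕-power of a bracket pair. -/
noncomputable def bpPow (p : ℤ[X] × ℤ[X]) : ℕ → ℤ[X] × ℤ[X]
  | 0 => (1, 0)
  | n + 1 => bpSum p (bpPow p n)

/-- Denominator closure polynomial D(a,b) = x·a + x²·b. -/
noncomputable def bpD (p : ℤ[X] × ℤ[X]) : ℤ[X] := X * p.1 + X ^ 2 * p.2

/-- Numerator closure polynomial N(a,b) = x²·a + x·b. -/
noncomputable def bpN (p : ℤ[X] × ℤ[X]) : ℤ[X] := X ^ 2 * p.1 + X * p.2

/-- R-closure polynomial R(a,b) = N(a,b) + D(a,b). -/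
noncomputable def bpR (p : ℤ[X] × ℤ[X]) : ℤ[X] := bpN p + bpD p

/-- The denominator closure divided by the loop value: `bpD p = X * bpDenom p`. Since
`x · D(A + B) = D(A) · D(B)`, this normalisation is multiplicative for `bpSum`. -/
noncomputable def bpDenom (p : ℤ[X] × ℤ[X]) : ℤ[X] := p.1 + X * p.2

lemma bpPow_fst (p : ℤ[X] × ℤ[X]) (n : ℕ) : (bpPow p n).1 = p.1 ^ n := by
  induction n with
  | zero => rfl
  | succ n ih => rw [bpPow, bpSum, ih, pow_succ']

lemma bpDenom_bpSum (p q : ℤ[X] × ℤ[X]) : bpDenom (bpSum p q) = bpDenom p * bpDenom q := by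
  simp only [bpDenom, bpSum]
  ring

lemma bpDenom_bpPow (p : ℤ[X] × ℤ[X]) (n : ℕ) : bpDenom (bpPow p n) = bpDenom p ^ n := by
  induction n with
  | zero => simp [bpPow, bpDenom]
  | succ n ih => rw [bpPow, bpDenom_bpSum, ih, pow_succ']

lemma bpN_eq_bpDenom_add (p : ℤ[X] × ℤ[X]) : bpN p = bpDenom p + (X ^ 2 - 1) * p.1 := by
  simp only [bpN, bpDenom]
  ring

lemma bpN_bpPow (p : ℤ[X] × ℤ[X]) (n : ℕ) :
    bpN (bpPow p n) = bpDenom p ^ n + (X ^ 2 - 1) * p.1 ^ n := by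
  rw [bpN_eq_bpDenom_add, bpDenom_bpPow, bpPow_fst]

theorem inv2_N (n : ℕ) :
    bpN (bpPow (X + 2, 1) n) = (2 * X + 2) ^ n + (X ^ 2 - 1) * (X + 2) ^ n := by
  have h : bpDenom (X + 2, 1) = 2 * X + 2 := by
    simp only [bpDenom]
    ring
  rw [bpN_bpPow, h]
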